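/- Let n be a positive integer and let u : ℤ → ℝ be the constant kernel u(k) = 1/(2n+1) for |k| ≤ n and u(k) = 0 otherwise. Then sup over all nonzero f ∈ ℓ²(ℤ) of ‖∇(f*u)‖₂ / ‖f‖₂ equals exactly 2/(2n+1). -/

import Mathlib

open scoped BigOperators

/-- Convolution of `f ∈ ℓ²(ℤ)` with a finitely supported kernel `u : ℤ → ℝ`:
`(f*u)(m) = ∑_{k} u(k) f(m-k)`. -/
noncomputable def conv (u : ℤ → ℝ) (f : ℤ → ℂ) : ℤ → ℂ :=
  fun m => ∑' k : ℤ, (u k : ℂ) * f (m - k)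

/-- The `ℓ²`-norm `(∑_{k∈ℤ} |f(k)|²)^{1/2}`. -/
noncomputable def l2norm (f : ℤ → ℂ) : ℝ :=
  Real.sqrt (∑' k : ℤ, ‖f k‖ ^ 2)

/-- The discrete derivative `(∇f)(k) = f(k+1) - f(k)`. -/
def dgrad (f : ℤ → ℂ) : ℤ → ℂ := fun k => f (k + 1) - f k

/-- The discrete Laplacian `(Δf)(k) = f(k+2) - 2f(k+1) + f(k)`. -/
def dlap (f : ℤ → ℂ) : ℤ → ℂ := fun k => f (k + 2) - 2 * f (k + 1) + f k

/-!
Summation by parts moves the derivative onto the kernel,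
`∇(f * u)(m) = ∑ₖ (u(k+1) - u(k)) f(m-k)`, and the derivative of the box kernel is
`(δ_{-n-1} - δₙ)/(2n+1)`. Hence, up to a translation, `∇(f * u) = (τ f - f)/(2n+1)` for
the translation `τ f = f(· + 2n+1)`, whose norm is at most `2‖f‖/(2n+1)` by the triangle
inequality. The bound is approached, as `r → 1`, by the geometric sequences `h(j) = (-r)ʲ`
(`j ≥ 0`), for which `‖∇h‖² = 2(1+r)‖h‖²`, upsampled to the lattice `(2n+1)ℤ`.
-/

section L2Norm

variable {f g : ℤ → ℂ}

lemma memℓp_two_iff_summable_sq : Memℓp f 2 ↔ Summable fun k => ‖f k‖ ^ 2 := by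
  rw [memℓp_gen_iff (by norm_num)]
  norm_num

lemma l2norm_eq_norm_lp (hf : Memℓp f 2) :
    l2norm f = ‖(⟨f, hf⟩ : lp (fun _ : ℤ => ℂ) 2)‖ := by
  rw [lp.norm_eq_tsum_rpow (by norm_num), l2norm, Real.sqrt_eq_rpow]
  norm_num

lemma l2norm_sub_le (hf : Memℓp f 2) (hg : Memℓp g 2) :
    l2norm (f - g) ≤ l2norm f + l2norm g := by
  rw [l2norm_eq_norm_lp hf, l2norm_eq_norm_lp hg, l2norm_eq_norm_lp (hf.sub hg)]
  exact norm_sub_le (⟨f, hf⟩ : lp (fun _ : ℤ => ℂ) 2) ⟨g, hg⟩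

lemma l2norm_const_mul (a : ℂ) (f : ℤ → ℂ) :
    l2norm (fun m => a * f m) = ‖a‖ * l2norm f := by
  simp only [l2norm, norm_mul, mul_pow]
  rw [tsum_mul_left, Real.sqrt_mul (by positivity), Real.sqrt_sq (norm_nonneg a)]

lemma l2norm_comp_add_right (f : ℤ → ℂ) (a : ℤ) : l2norm (fun m => f (m + a)) = l2norm f :=
  congrArg Real.sqrt ((Equiv.addRight a).tsum_eq fun k => ‖f k‖ ^ 2)

lemma Memℓp.comp_add_right (hf : Memℓp f 2) (a : ℤ) : Memℓp (fun m => f (m + a)) 2 :=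
  memℓp_two_iff_summable_sq.2 <|
    (Equiv.addRight a).summable_iff.2 (memℓp_two_iff_summable_sq.1 hf)

lemma l2norm_comp_add_sub_div_le (hf : Memℓp f 2) (d : ℤ) :
    l2norm (fun m => f (m + d) - f m) / l2norm f ≤ 2 := by
  refine div_le_of_le_mul₀ (Real.sqrt_nonneg _) zero_le_two ?_
  calc l2norm (fun m => f (m + d) - f m)
      ≤ l2norm (fun m => f (m + d)) + l2norm f := l2norm_sub_le (hf.comp_add_right d) hf
    _ = 2 * l2norm f := by rw [l2norm_comp_add_right]; ring

end L2Norm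

section Convolution

lemma dgrad_conv {u : ℤ → ℝ} (hu : u.HasFiniteSupport) (f : ℤ → ℂ) (m : ℤ) :
    dgrad (conv u f) m = ∑' k, ((u (k + 1) - u k : ℝ) : ℂ) * f (m - k) := by
  have hsum : ∀ a : ℤ, Summable fun k => (u (k + a) : ℂ) * f (m - k) := fun a =>
    summable_of_hasFiniteSupport <| (hu.preimage (add_left_injective a).injOn).subset
      fun k hk => by simpa using left_ne_zero_of_mul hk
  have hshift : conv u f (m + 1) = ∑' k, (u (k + 1) : ℂ) * f (m - k) := by
    rw [conv, ← (Equiv.addRight 1).tsum_eq]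
    simp [add_sub_add_right_eq_sub]
  rw [dgrad, hshift, conv]
  simp only [Complex.ofReal_sub, sub_mul]
  rw [(hsum 1).tsum_sub (by simpa using hsum 0)]

noncomputable def boxKernel (n : ℕ) : ℤ → ℝ :=
  fun k => if |k| ≤ (n : ℤ) then (1 : ℝ) / (2 * n + 1) else 0

lemma boxKernel_hasFiniteSupport (n : ℕ) : (boxKernel n).HasFiniteSupport :=
  (Set.finite_Icc (-n : ℤ) n).subset fun k hk => by
    by_contra h
    simp_all [boxKernel, abs_le]

lemma boxKernel_add_one_sub (n : ℕ) (k : ℤ) :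
    boxKernel n (k + 1) - boxKernel n k =
      (if k = -(n + 1) then (2 * n + 1 : ℝ)⁻¹ else 0) -
        (if k = n then (2 * n + 1 : ℝ)⁻¹ else 0) := by
  simp only [boxKernel, abs_le, one_div]
  split_ifs <;> first | (exfalso; omega) | simp

lemma dgrad_conv_boxKernel (n : ℕ) (f : ℤ → ℂ) (m : ℤ) :
    dgrad (conv (boxKernel n) f) m =
      (2 * n + 1 : ℂ)⁻¹ * (f (m + (n + 1)) - f (m - n)) := by
  have hdelta : ∀ b : ℤ,
      HasSum (fun k => if k = b then (2 * n + 1 : ℂ)⁻¹ * f (m - k) else 0)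
        ((2 * n + 1 : ℂ)⁻¹ * f (m - b)) := fun b => by
    convert hasSum_ite_eq b ((2 * n + 1 : ℂ)⁻¹ * f (m - b)) using 3 with k hk
    rw [hk]
  rw [dgrad_conv (boxKernel_hasFiniteSupport n)]
  push_cast [boxKernel_add_one_sub, apply_ite Complex.ofReal]
  simp only [sub_mul, ite_mul, zero_mul]
  rw [((hdelta _).sub (hdelta _)).tsum_eq, mul_sub, sub_neg_eq_add]

lemma l2norm_dgrad_conv_boxKernel (n : ℕ) (f : ℤ → ℂ) :
    l2norm (dgrad (conv (boxKernel n) f)) =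
      (2 * n + 1 : ℝ)⁻¹ * l2norm (fun m => f (m + (2 * n + 1)) - f m) := by
  set D : ℤ → ℂ := fun m => f (m + (2 * n + 1)) - f m
  calc l2norm (dgrad (conv (boxKernel n) f))
      = l2norm (fun m => (2 * n + 1 : ℂ)⁻¹ * D (m + -n)) := by
        congr 1; funext m; rw [dgrad_conv_boxKernel]; simp only [D]; ring_nf
    _ = (2 * n + 1 : ℝ)⁻¹ * l2norm D := by
        rw [l2norm_const_mul, l2norm_comp_add_right D, norm_inv]
        norm_cast

end Convolution

section Upsampling

noncomputable def upsample (d : ℤ) (h : ℤ → ℂ) : ℤ → ℂ := Function.extend (d * ·) h 0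

variable {d : ℤ}

lemma upsample_of_notMem_range {h : ℤ → ℂ} {m : ℤ} (hm : m ∉ Set.range (d * ·)) :
    upsample d h m = 0 :=
  Function.extend_apply' _ _ _ hm

variable (hd : d ≠ 0)
include hd

lemma upsample_mul (h : ℤ → ℂ) (j : ℤ) : upsample d h (d * j) = h j :=
  (mul_right_injective₀ hd).extend_apply h 0 j

lemma upsample_add_sub (h : ℤ → ℂ) (m : ℤ) :
    upsample d h (m + d) - upsample d h m = upsample d (dgrad h) m := by
  by_cases hm : ∃ j, d * j = m
  · obtain ⟨j, rfl⟩ := hm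
    rw [show d * j + d = d * (j + 1) by ring, upsample_mul hd, upsample_mul hd, upsample_mul hd,
      dgrad]
  · have hm' : ¬ ∃ j, d * j = m + d :=
      fun ⟨j, hj⟩ => hm ⟨j - 1, by rw [mul_sub, hj]; ring⟩
    rw [upsample_of_notMem_range hm, upsample_of_notMem_range hm', upsample_of_notMem_range hm,
      sub_zero]

lemma tsum_norm_upsample_sq (h : ℤ → ℂ) :
    ∑' k, ‖upsample d h k‖ ^ 2 = ∑' j, ‖h j‖ ^ 2 := by
  have hsupp : (fun k => ‖upsample d h k‖ ^ 2).support ⊆ Set.range (d * ·) := fun k hk => by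
    by_contra hk'
    simp [upsample_of_notMem_range hk'] at hk
  rw [← (mul_right_injective₀ hd).tsum_eq hsupp]
  simp only [upsample_mul hd]

lemma l2norm_upsample (h : ℤ → ℂ) : l2norm (upsample d h) = l2norm h :=
  congrArg Real.sqrt (tsum_norm_upsample_sq hd h)

lemma memℓp_upsample {h : ℤ → ℂ} (hh : Memℓp h 2) : Memℓp (upsample d h) 2 := by
  rw [memℓp_two_iff_summable_sq] at hh ⊢
  refine ((mul_right_injective₀ hd).summable_iff fun k hk => ?_).1 ?_
  · simp [upsample_of_notMem_range hk]
  · simpa only [Function.comp_def, upsample_mul hd] using hh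

end Upsampling

section Geometric

lemma tsum_int_eq_tsum_nat_of_neg {F : ℤ → ℝ} (hF : ∀ k < 0, F k = 0) :
    ∑' k, F k = ∑' j : ℕ, F j :=
  (Nat.cast_injective.tsum_eq fun k hk =>
    ⟨k.toNat, Int.toNat_of_nonneg (not_lt.1 fun h => hk (hF k h))⟩).symm

lemma summable_int_iff_of_neg {F : ℤ → ℝ} (hF : ∀ k < 0, F k = 0) :
    Summable (fun j : ℕ => F j) ↔ Summable F :=
  Nat.cast_injective.summable_iff fun k hk =>
    hF k (not_le.1 fun h => hk ⟨k.toNat, Int.toNat_of_nonneg h⟩)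

noncomputable def geomSeq (r : ℝ) : ℤ → ℂ :=
  fun k => if 0 ≤ k then (-(r : ℂ)) ^ k.toNat else 0

variable {r : ℝ}

lemma geomSeq_natCast (j : ℕ) : geomSeq r j = (-(r : ℂ)) ^ j := by
  simp [geomSeq]

lemma geomSeq_of_neg {k : ℤ} (hk : k < 0) : geomSeq r k = 0 :=
  if_neg hk.not_ge

lemma dgrad_geomSeq_natCast (j : ℕ) : dgrad (geomSeq r) j = -(1 + r) * (-(r : ℂ)) ^ j := by
  rw [dgrad, ← Nat.cast_succ, geomSeq_natCast, geomSeq_natCast, pow_succ]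
  ring

lemma dgrad_geomSeq_neg_one : dgrad (geomSeq r) (-1) = 1 := by
  simp [dgrad, geomSeq]

lemma norm_geomSeq_natCast_sq (hr0 : 0 ≤ r) (j : ℕ) : ‖geomSeq r j‖ ^ 2 = (r ^ 2) ^ j := by
  rw [geomSeq_natCast, norm_pow, norm_neg, Complex.norm_real, Real.norm_of_nonneg hr0, ← pow_mul,
    mul_comm, pow_mul]

variable (hr0 : 0 ≤ r) (hr1 : r < 1)
include hr0 hr1

lemma tsum_norm_geomSeq_sq : ∑' k, ‖geomSeq r k‖ ^ 2 = (1 - r ^ 2)⁻¹ := by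
  rw [tsum_int_eq_tsum_nat_of_neg fun k hk => by simp [geomSeq_of_neg hk]]
  simp only [norm_geomSeq_natCast_sq hr0]
  exact tsum_geometric_of_lt_one (sq_nonneg r) (by nlinarith)

lemma memℓp_geomSeq : Memℓp (geomSeq r) 2 := by
  rw [memℓp_two_iff_summable_sq,
    ← summable_int_iff_of_neg fun k hk => by simp [geomSeq_of_neg hk]]
  simp only [norm_geomSeq_natCast_sq hr0]
  exact summable_geometric_of_lt_one (sq_nonneg r) (by nlinarith)

lemma tsum_norm_dgrad_geomSeq_sq : ∑' k, ‖dgrad (geomSeq r) k‖ ^ 2 = 2 * (1 - r)⁻¹ := by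
  have hnorm (j : ℕ) : ‖dgrad (geomSeq r) j‖ ^ 2 = (1 + r) ^ 2 * (r ^ 2) ^ j := by
    rw [dgrad_geomSeq_natCast, norm_mul, norm_pow, norm_neg, norm_neg, Complex.norm_real,
      Real.norm_of_nonneg hr0, mul_pow, ← pow_mul, mul_comm j, pow_mul]
    norm_cast
    rw [Real.norm_of_nonneg (by linarith)]
  have hsummable : Summable fun j : ℕ => ‖dgrad (geomSeq r) j‖ ^ 2 := by
    simpa only [hnorm] using
      (summable_geometric_of_lt_one (sq_nonneg r) (by nlinarith)).mul_left ((1 + r) ^ 2)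
  rw [← (Equiv.subRight 1).tsum_eq,
    tsum_int_eq_tsum_nat_of_neg fun k hk => by
      simp [dgrad, geomSeq_of_neg hk, geomSeq_of_neg (k := k - 1) (by omega)],
    tsum_eq_zero_add' (by simpa using hsummable)]
  simp only [Equiv.subRight_apply, Nat.cast_zero, zero_sub, dgrad_geomSeq_neg_one, norm_one,
    one_pow, Nat.cast_add_one, add_sub_cancel_right, hnorm, tsum_mul_left,
    tsum_geometric_of_lt_one (sq_nonneg r) (by nlinarith : r ^ 2 < 1)]
  have h1 : 1 - r ≠ 0 := by linarith
  have h2 : 1 - r ^ 2 ≠ 0 := by nlinarith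
  field_simp
  ring

lemma l2norm_dgrad_geomSeq :
    l2norm (dgrad (geomSeq r)) = √(2 * (1 + r)) * l2norm (geomSeq r) := by
  rw [l2norm, l2norm, tsum_norm_dgrad_geomSeq_sq hr0 hr1, tsum_norm_geomSeq_sq hr0 hr1,
    ← Real.sqrt_mul (by linarith)]
  congr 1
  have h1 : 1 - r ≠ 0 := by linarith
  have h2 : 1 - r ^ 2 ≠ 0 := by nlinarith
  field_simp
  ring

lemma l2norm_geomSeq_pos : 0 < l2norm (geomSeq r) := by
  rw [l2norm, tsum_norm_geomSeq_sq hr0 hr1]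
  exact Real.sqrt_pos.2 (inv_pos.2 (by nlinarith))

end Geometric

lemma exists_lt_l2norm_comp_add_sub_div {d : ℤ} (hd : d ≠ 0) {w : ℝ} (hw : w < 2) :
    ∃ f : ℤ → ℂ, Memℓp f 2 ∧ f ≠ 0 ∧
      w < l2norm (fun m => f (m + d) - f m) / l2norm f := by
  -- with `r = v²/4`, the ratio `√(2(1+r))` exceeds `v` exactly because `v < 2`
  set v := max w 0
  have hv : v < 2 := max_lt hw two_pos
  have hr0 : 0 ≤ v ^ 2 / 4 := by positivity
  have hr1 : v ^ 2 / 4 < 1 := by nlinarith [le_max_right w 0]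
  refine ⟨upsample d (geomSeq (v ^ 2 / 4)), memℓp_upsample hd (memℓp_geomSeq hr0 hr1),
    fun h => ?_, ?_⟩
  · have h0 := congrFun h 0
    rw [← mul_zero d, upsample_mul hd] at h0
    simp [geomSeq] at h0
  · simp only [upsample_add_sub hd]
    rw [l2norm_upsample hd, l2norm_upsample hd, l2norm_dgrad_geomSeq hr0 hr1,
      mul_div_cancel_right₀ _ (l2norm_geomSeq_pos hr0 hr1).ne']
    calc w ≤ v := le_max_left w 0
      _ < √(2 * (1 + v ^ 2 / 4)) := (Real.lt_sqrt (le_max_right w 0)).2 (by nlinarith)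

theorem smoothest_average_first_derivative_constant_kernel
    (n : ℕ) (u : ℤ → ℝ)
    (hu : ∀ k : ℤ, u k = if |k| ≤ (n : ℤ) then (1 : ℝ) / (2 * n + 1) else 0) :
    sSup {r : ℝ | ∃ f : ℤ → ℂ, Memℓp f 2 ∧ f ≠ 0 ∧
        r = l2norm (dgrad (conv u f)) / l2norm f} = 2 / (2 * (n : ℝ) + 1) := by
  obtain rfl : u = boxKernel n := funext hu
  have hd : (2 * n + 1 : ℤ) ≠ 0 := by omega
  have hc : 0 < (2 * n + 1 : ℝ) := by positivity
  simp only [l2norm_dgrad_conv_boxKernel, mul_div_assoc]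
  rw [div_eq_inv_mul]
  refine csSup_eq_of_forall_le_of_forall_lt_exists_gt ?_ ?_ fun w hw => ?_
  · obtain ⟨f, hf, hf0, -⟩ := exists_lt_l2norm_comp_add_sub_div hd two_pos
    exact ⟨_, f, hf, hf0, rfl⟩
  · rintro _ ⟨f, hf, -, rfl⟩
    exact mul_le_mul_of_nonneg_left (l2norm_comp_add_sub_div_le hf _) (inv_pos.2 hc).le
  · obtain ⟨f, hf, hf0, hlt⟩ :=
      exists_lt_l2norm_comp_add_sub_div hd ((lt_inv_mul_iff₀ hc).1 hw)
    exact ⟨_, ⟨f, hf, hf0, rfl⟩, (lt_inv_mul_iff₀ hc).2 hlt⟩
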